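/- arXiv:2601.18360 — 2 statements merged into one kernel-verified Lean document; each statement's English description precedes it below -/
import Mathlib

section
/- Let G = (V, E) be a finite graph with V = [m], and for each i ∈ [m] let D_i = { j + m : (i,j) ∈ E } ∪ {i} ⊆ [2m]. Define h(S) = ∑_{i=1}^m (1 − 𝟙[D_i ⊆ S]) for S ⊆ [2m], and let N_k = {k, k+m} for k ∈ [m]. Then for any ℓ ∈ ℕ, G has an independent set of size at least ℓ if and only if there exists S ⊆ [2m] with |S ∩ N_k| ≤ 1 for all k ∈ [m] and h(S) ≤ m − ℓ. -/
theorem stmt18 {m : ℕ} (G : SimpleGraph (Fin m)) [DecidableRel G.Adj] (ℓ : ℕ) :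
    (∃ I : Finset (Fin m), (∀ i ∈ I, ∀ j ∈ I, ¬ G.Adj i j) ∧ ℓ ≤ I.card) ↔
      (∃ S : Finset (Fin m ⊕ Fin m),
        (∀ k : Fin m, (S ∩ {Sum.inl k, Sum.inr k}).card ≤ 1) ∧
        (∑ i : Fin m, ((1 : ℝ) -
          if insert (Sum.inl i) ((G.neighborFinset i).image Sum.inr) ⊆ S
          then 1 else 0)) ≤ (m : ℝ) - ℓ) := by
  have key : ∀ S : Finset (Fin m ⊕ Fin m),
      (∑ i : Fin m, ((1 : ℝ) -
        if insert (Sum.inl i) ((G.neighborFinset i).image Sum.inr) ⊆ S then 1 else 0))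
      = (m : ℝ) - (Finset.univ.filter
          (fun i => insert (Sum.inl i) ((G.neighborFinset i).image Sum.inr) ⊆ S)).card := by
    intro S
    rw [Finset.sum_sub_distrib, Finset.sum_const, Finset.sum_boole]
    simp
  constructor
  · rintro ⟨I, hI, hcard⟩
    refine ⟨I.image Sum.inl ∪ Iᶜ.image Sum.inr, ?_, ?_⟩
    · intro k
      by_cases hk : k ∈ I
      · have : (I.image Sum.inl ∪ Iᶜ.image Sum.inr) ∩ {Sum.inl k, Sum.inr k}
            = {Sum.inl k} := by
          ext x
          rcases x with a | a <;> simp_all [eq_comm]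
        rw [this]; simp
      · have : (I.image Sum.inl ∪ Iᶜ.image Sum.inr) ∩ {Sum.inl k, Sum.inr k}
            = {Sum.inr k} := by
          ext x
          rcases x with a | a <;> simp_all [eq_comm]
        rw [this]; simp
    · rw [key]
      have hsub : I ⊆ Finset.univ.filter
          (fun i => insert (Sum.inl i) ((G.neighborFinset i).image Sum.inr)
            ⊆ I.image Sum.inl ∪ Iᶜ.image Sum.inr) := by
        intro i hi
        simp only [Finset.mem_filter, Finset.mem_univ, true_and]
        intro x hx
        simp only [Finset.mem_insert, Finset.mem_image, SimpleGraph.mem_neighborFinset] at hx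
        rcases hx with rfl | ⟨j, hj, rfl⟩
        · exact Finset.mem_union_left _ (Finset.mem_image_of_mem _ hi)
        · refine Finset.mem_union_right _ (Finset.mem_image_of_mem _ ?_)
          simp only [Finset.mem_compl]
          intro hjI
          exact hI i hi j hjI hj
      have := Finset.card_le_card hsub
      have : (ℓ : ℝ) ≤ (Finset.univ.filter
          (fun i => insert (Sum.inl i) ((G.neighborFinset i).image Sum.inr)
            ⊆ I.image Sum.inl ∪ Iᶜ.image Sum.inr)).card := by
        exact_mod_cast le_trans hcard this
      linarith
  · rintro ⟨S, hS, hsum⟩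
    set I := Finset.univ.filter
      (fun i => insert (Sum.inl i) ((G.neighborFinset i).image Sum.inr) ⊆ S) with hIdef
    refine ⟨I, ?_, ?_⟩
    · intro i hi j hj hadj
      have hiS : (Sum.inl i : Fin m ⊕ Fin m) ∈ S := by
        have := (Finset.mem_filter.mp hi).2
        exact this (Finset.mem_insert_self _ _)
      have hirS : (Sum.inr i : Fin m ⊕ Fin m) ∈ S := by
        have hj2 := (Finset.mem_filter.mp hj).2
        apply hj2
        apply Finset.mem_insert_of_mem
        exact Finset.mem_image_of_mem _ (by simp [hadj.symm])
      have hpair : ({Sum.inl i, Sum.inr i} : Finset (Fin m ⊕ Fin m))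
          ⊆ S ∩ {Sum.inl i, Sum.inr i} := by
        intro x hx
        rcases Finset.mem_insert.mp hx with rfl | hx
        · exact Finset.mem_inter.mpr ⟨hiS, by simp⟩
        · rw [Finset.mem_singleton] at hx; subst hx
          exact Finset.mem_inter.mpr ⟨hirS, by simp⟩
      have h2 : 2 ≤ (S ∩ {Sum.inl i, Sum.inr i}).card := by
        calc 2 = ({Sum.inl i, Sum.inr i} : Finset (Fin m ⊕ Fin m)).card := by simp
        _ ≤ _ := Finset.card_le_card hpair
      have := hS i
      omega
    · rw [key] at hsum
      have : (ℓ : ℝ) ≤ (I.card : ℝ) := by linarith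
      exact_mod_cast this
end

section
/- Let f : ℝ → ℝ be concave with f(0) = 0, a ∈ ℝ^n nonnegative, η ∈ ℝ^n, and {N_k}_{k∈[t]} a partition of [n]. Suppose that for every S ⊆ [n] with |S ∩ N_k| ≤ 1 for all k we have f(a(S)) ≥ ∑_{i∈S} η_i. Fix j ∈ [n] and a permutation δ of [n], and let δ(j) = {δ_1,…,δ_j}. Then the minimum of f(a(S)) − ∑_{i∈S\{δ_j}} η_i over all S with δ_j ∈ S, S ⊆ δ(j), and |S ∩ N_k| ≤ 1 for all k, is at least f(a(δ(j))) − f(a(δ(j−1))). -/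
lemma concave_key {f : ℝ → ℝ} (hf : ConcaveOn ℝ Set.univ f) {x y c : ℝ}
    (hc : 0 ≤ c) (hxy : x ≤ y) : f (y + c) - f y ≤ f (x + c) - f x := by
  rcases eq_or_lt_of_le (by linarith : x ≤ y + c) with h | h
  · have hc0 : c = 0 := by linarith
    have hxy0 : x = y := by linarith
    simp [hc0, hxy0]
  · set D : ℝ := y + c - x with hD
    have hDpos : 0 < D := by simp [hD]; linarith
    set θ : ℝ := c / D with hθ
    have hθ0 : 0 ≤ θ := div_nonneg hc hDpos.le
    have hθ1 : θ ≤ 1 := by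
      rw [hθ, div_le_one hDpos]; linarith
    have h1 := hf.2 (Set.mem_univ x) (Set.mem_univ (y + c))
      (by linarith : (0:ℝ) ≤ 1 - θ) hθ0 (by ring)
    have h2 := hf.2 (Set.mem_univ x) (Set.mem_univ (y + c))
      hθ0 (by linarith : (0:ℝ) ≤ 1 - θ) (by ring)
    have e1 : (1 - θ) • x + θ • (y + c) = x + c := by
      have : θ * D = c := div_mul_cancel₀ c hDpos.ne'
      simp only [smul_eq_mul]; nlinarith [this]
    have e2 : θ • x + (1 - θ) • (y + c) = y := by
      have : θ * D = c := div_mul_cancel₀ c hDpos.ne'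
      simp only [smul_eq_mul]; nlinarith [this]
    rw [e1] at h1; rw [e2] at h2
    simp only [smul_eq_mul] at h1 h2
    nlinarith [h1, h2]

theorem stmt19 {n t : ℕ} (f : ℝ → ℝ) (hf : ConcaveOn ℝ Set.univ f)
    (hf0 : f 0 = 0) (a : Fin n → ℝ) (ha : ∀ i, 0 ≤ a i)
    (η : Fin n → ℝ) (N : Fin t → Finset (Fin n))
    (hvalid : ∀ S : Finset (Fin n), (∀ k, (S ∩ N k).card ≤ 1) →
      ∑ i ∈ S, η i ≤ f (∑ i ∈ S, a i))
    (δ : Equiv.Perm (Fin n)) (j : Fin n) :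
    ∀ S : Finset (Fin n), δ j ∈ S → S ⊆ (Finset.Iic j).image δ →
      (∀ k, (S ∩ N k).card ≤ 1) →
      f (∑ i ∈ (Finset.Iic j).image δ, a i) -
          f (∑ i ∈ (Finset.Iio j).image δ, a i) ≤
        f (∑ i ∈ S, a i) - ∑ i ∈ S.erase (δ j), η i := by
  intro S hjS hSsub hSN
  set S' := S.erase (δ j) with hS'
  -- S' satisfies the cardinality constraints
  have hS'N : ∀ k, (S' ∩ N k).card ≤ 1 := fun k =>
    le_trans (Finset.card_le_card (Finset.inter_subset_inter_right (Finset.erase_subset _ _))) (hSN k)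
  have hη : ∑ i ∈ S', η i ≤ f (∑ i ∈ S', a i) := hvalid S' hS'N
  -- decompositions
  have hnotmem : δ j ∉ (Finset.Iio j).image δ := by
    simp only [Finset.mem_image]
    rintro ⟨i, hi, hij⟩
    exact absurd (δ.injective hij) (by simpa using (Finset.mem_Iio.mp hi).ne)
  have hIic : (Finset.Iic j).image δ = insert (δ j) ((Finset.Iio j).image δ) := by
    rw [← Finset.image_insert]
    congr 1
    ext i
    simp [Finset.mem_Iic, Finset.mem_Iio, le_iff_lt_or_eq, or_comm]
  have hsumIic : ∑ i ∈ (Finset.Iic j).image δ, a i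
      = ∑ i ∈ (Finset.Iio j).image δ, a i + a (δ j) := by
    rw [hIic, Finset.sum_insert hnotmem]; ring
  have hsumS : ∑ i ∈ S, a i = ∑ i ∈ S', a i + a (δ j) := by
    rw [hS', ← Finset.add_sum_erase _ _ hjS]; ring
  -- S' ⊆ Iio image, hence sum comparison
  have hS'sub : S' ⊆ (Finset.Iio j).image δ := by
    intro i hi
    have hiS : i ∈ S := Finset.mem_of_mem_erase hi
    have := hSsub hiS
    rw [hIic] at this
    rcases Finset.mem_insert.mp this with h | h
    · exact absurd h (Finset.ne_of_mem_erase hi)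
    · exact h
  have hsumle : ∑ i ∈ S', a i ≤ ∑ i ∈ (Finset.Iio j).image δ, a i :=
    Finset.sum_le_sum_of_subset_of_nonneg hS'sub (fun i _ _ => ha i)
  have hkey := concave_key hf (ha (δ j)) hsumle
  rw [hsumIic, hsumS]
  linarith
end
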